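/- Consider a directed n-cycle (n ≥ 4) with nonzero edge weights, where nodes 1,…,k are excited and nodes k+1,…,n are measured (2 ≤ k ≤ n-2), and no node is both excited and measured. Then the observed matrix M = C T B (rows k+1,…,n, columns 1,…,k of T = (I-G)^{-1}) does not determine the edge weights: there exist two cycle matrices G, G' with nonzero edge weights and the same observed matrix M but with g_k ≠ g'_k (the edge k → k+1 differs). Concretely, for any nonzero scalar λ ≠ 1 one can scale g_k and g_n appropriately to preserve M while changing g_k. -/

import Mathlib

/-!
Entry `(i, j)` of `(1 - G)⁻¹` is the weight of the directed path `j → ⋯ → i` divided by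
`1 - P`. For an excited `j` and a measured `i` this path crosses the edge `k → k+1` but never
the edge `n → 1`. Multiplying `g_k` by `c` and `g_n` by `d`, where `c d P = 1 - c (1 - P)`,
therefore multiplies every observed numerator by `c` and turns `1 - P` into `c (1 - P)`,
so the observed entries do not change; any `c ∉ {0, 1, (1 - P)⁻¹}` works.
-/

/-- The `n × n` network matrix of a directed `n`-cycle: entry `(i+1 mod n, i)` is `g i`. -/
def cycleMatrix {n : ℕ} [NeZero n] (g : Fin n → ℝ) : Matrix (Fin n) (Fin n) ℝ :=
  Matrix.of fun i j => if i = j + 1 then g j else 0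

open Finset
open scoped Fin.NatCast

section PathWeight

variable {n : ℕ} [NeZero n] {M : Type*} [CommMonoid M]

def cyclePathWeight (g : Fin n → M) (j i : Fin n) : M :=
  ∏ l ∈ range (i - j).val, g (j + l)

lemma cyclePathWeight_self (g : Fin n → M) (j : Fin n) : cyclePathWeight g j j = 1 := by
  simp [cyclePathWeight]

lemma prod_range_add_natCast (g : Fin n → M) (j : Fin n) :
    ∏ l ∈ range n, g (j + l) = ∏ m, g m := by
  rw [← Fin.prod_univ_eq_prod_range (fun l => g (j + l))]
  simp only [Fin.cast_val_eq_self]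
  exact Equiv.prod_comp (Equiv.addLeft j) g

lemma mul_cyclePathWeight_sub_one (g : Fin n → M) (j i : Fin n) :
    g (i - 1) * cyclePathWeight g j (i - 1) =
      if i = j then ∏ m, g m else cyclePathWeight g j i := by
  have hi : i - 1 = j + ((i - j - 1).val : Fin n) := by rw [Fin.cast_val_eq_self]; abel
  rw [cyclePathWeight, cyclePathWeight, show i - 1 - j = i - j - 1 by abel, hi, mul_comm,
    ← prod_range_succ (fun l => g (j + l))]
  split_ifs with hij
  · obtain ⟨m, rfl⟩ := Nat.exists_eq_succ_of_ne_zero (NeZero.ne n)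
    rw [hij, sub_self, zero_sub, Fin.coe_neg_one, prod_range_add_natCast]
  · have hne : i - j ≠ 0 := sub_ne_zero.mpr hij
    rw [Fin.val_sub_one_of_ne_zero hne, Nat.sub_add_cancel (Nat.one_le_iff_ne_zero.mpr
      (Fin.val_ne_zero_iff.mpr hne))]

lemma cyclePathWeight_mul (c g : Fin n → M) (j i : Fin n) :
    cyclePathWeight (c * g) j i = cyclePathWeight c j i * cyclePathWeight g j i :=
  prod_mul_distrib

lemma cyclePathWeight_mulSingle (a j i : Fin n) (v : M) :
    cyclePathWeight (Pi.mulSingle a v) j i = if (a - j).val < (i - j).val then v else 1 := by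
  have hcast : ∀ l < n, j + (l : Fin n) = a ↔ l = (a - j).val := by
    intro l hl
    rw [← eq_sub_iff_add_eq', Fin.ext_iff, Fin.val_cast_of_lt hl]
  have hd := (i - j).isLt
  split_ifs with ha
  · rw [cyclePathWeight, prod_eq_single_of_mem _ (mem_range.mpr ha)]
    · simp
    · intro l hl hne
      rw [mem_range] at hl
      rw [Pi.mulSingle_apply, if_neg (mt (hcast l (by omega)).mp hne)]
  · refine prod_eq_one fun l hl => ?_
    rw [mem_range] at hl
    rw [Pi.mulSingle_apply, if_neg (by rw [hcast l (by omega)]; omega)]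

end PathWeight

lemma one_sub_prod_mulSingle_mul_mulSingle_mul {ι R : Type*} [Fintype ι] [DecidableEq ι]
    [CommRing R] {g : ι → R} {a b : ι} {c d : R}
    (hcd : c * d * ∏ m, g m = 1 - c * (1 - ∏ m, g m)) :
    1 - ∏ m, (Pi.mulSingle a c * Pi.mulSingle b d * g : ι → R) m = c * (1 - ∏ m, g m) := by
  simp only [Pi.mul_apply, prod_mul_distrib, prod_pi_mulSingle', mem_univ, if_true, hcd]
  ring

lemma exists_rescaling {P : ℝ} (hP0 : P ≠ 0) :
    ∃ c d : ℝ, c ≠ 0 ∧ c ≠ 1 ∧ d ≠ 0 ∧ c * d * P = 1 - c * (1 - P) := by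
  obtain ⟨c, hc⟩ := Infinite.exists_notMem_finset ({0, 1, (1 - P)⁻¹} : Finset ℝ)
  simp only [mem_insert, mem_singleton, not_or] at hc
  obtain ⟨hc0, hc1, hcP⟩ := hc
  have hc' : 1 - c * (1 - P) ≠ 0 := fun h => hcP (eq_inv_of_mul_eq_one_left (by linarith))
  refine ⟨c, (1 - c * (1 - P)) / (c * P), hc0, hc1, div_ne_zero hc' (mul_ne_zero hc0 hP0), ?_⟩
  field_simp

section CycleMatrix

variable {n : ℕ} [NeZero n]

lemma cycleMatrix_mul_apply (g : Fin n → ℝ) (A : Matrix (Fin n) (Fin n) ℝ) (i j : Fin n) :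
    (cycleMatrix g * A) i j = g (i - 1) * A (i - 1) j := by
  simp only [Matrix.mul_apply, cycleMatrix, Matrix.of_apply, ite_mul, zero_mul,
    ← sub_eq_iff_eq_add, eq_comm (a := i - 1), sum_ite_eq', mem_univ, if_true]

lemma inv_one_sub_cycleMatrix_apply (g : Fin n → ℝ) (hP : 1 - ∏ m, g m ≠ 0) (i j : Fin n) :
    (1 - cycleMatrix g)⁻¹ i j = cyclePathWeight g j i / (1 - ∏ m, g m) := by
  let T : Matrix (Fin n) (Fin n) ℝ :=
    Matrix.of fun i j => cyclePathWeight g j i / (1 - ∏ m, g m)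
  suffices (1 - cycleMatrix g) * T = 1 by rw [Matrix.inv_eq_right_inv this]; rfl
  ext i j
  rw [sub_mul, one_mul, Matrix.sub_apply, cycleMatrix_mul_apply]
  simp only [T, Matrix.of_apply, mul_div_assoc', ← sub_div, mul_cyclePathWeight_sub_one,
    Matrix.one_apply]
  split_ifs with hij
  · rw [hij, cyclePathWeight_self, div_self hP]
  · rw [sub_self, zero_div]

theorem inv_one_sub_cycleMatrix_rescale_apply {g : Fin n → ℝ} {a b i j : Fin n} {c d : ℝ}
    (hc : c ≠ 0) (hP : 1 - ∏ m, g m ≠ 0) (hcd : c * d * ∏ m, g m = 1 - c * (1 - ∏ m, g m))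
    (ha : (a - j).val < (i - j).val) (hb : (i - j).val ≤ (b - j).val) :
    (1 - cycleMatrix (Pi.mulSingle a c * Pi.mulSingle b d * g))⁻¹ i j =
      (1 - cycleMatrix g)⁻¹ i j := by
  have hprod := one_sub_prod_mulSingle_mul_mulSingle_mul (a := a) (b := b) hcd
  rw [inv_one_sub_cycleMatrix_apply _ hP,
    inv_one_sub_cycleMatrix_apply _ (hprod ▸ mul_ne_zero hc hP), hprod,
    cyclePathWeight_mul, cyclePathWeight_mul, cyclePathWeight_mulSingle,
    cyclePathWeight_mulSingle, if_pos ha, if_neg hb.not_gt, mul_one, mul_div_mul_left _ _ hc]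

end CycleMatrix

/-- Contiguous EMP on an `n`-cycle (`n ≥ 4`): nodes `1,…,k` excited (indices `0,…,k-1`),
nodes `k+1,…,n` measured (indices `k,…,n-1`), no node both excited and measured.
The observed submatrix `M = C T B` does not determine the edge weights: there is a
second cycle with nonzero edge weights having the same observed entries but a different
weight on the edge `k → k+1`. -/
theorem contiguous_EMP_not_identifiable {n : ℕ} [NeZero n]
    (k : ℕ) (hk1 : 2 ≤ k) (hk2 : k ≤ n - 2)
    (g : Fin n → ℝ) (hg : ∀ i, g i ≠ 0) (hP : 1 - ∏ i, g i ≠ 0) :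
    ∃ g' : Fin n → ℝ,
      (∀ i, g' i ≠ 0) ∧ 1 - ∏ i, g' i ≠ 0 ∧
      g' ⟨k - 1, by omega⟩ ≠ g ⟨k - 1, by omega⟩ ∧
      ∀ i j : Fin n, k ≤ i.val → j.val < k →
        (1 - cycleMatrix g')⁻¹ i j = (1 - cycleMatrix g)⁻¹ i j := by
  obtain ⟨c, d, hc0, hc1, hd0, hcd⟩ :=
    exists_rescaling (prod_ne_zero_iff.mpr fun i _ => hg i)
  let a : Fin n := ⟨k - 1, by omega⟩
  let b : Fin n := ⟨n - 1, by omega⟩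
  have hab : a ≠ b := by simp [a, b, Fin.ext_iff]; omega
  refine ⟨Pi.mulSingle a c * Pi.mulSingle b d * g, fun i => ?_, ?_, ?_, fun i j hi hj => ?_⟩
  · simp only [Pi.mul_apply, Pi.mulSingle_apply]
    split_ifs <;> simp [*]
  · rw [one_sub_prod_mulSingle_mul_mulSingle_mul hcd]
    exact mul_ne_zero hc0 hP
  · show (Pi.mulSingle a c * Pi.mulSingle b d * g : Fin n → ℝ) a ≠ g a
    simpa [hab, hg a] using hc1
  · have hja : j ≤ a := Fin.le_iff_val_le_val.mpr (by simp only [a]; omega)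
    have hji : j ≤ i := Fin.le_iff_val_le_val.mpr (by omega)
    have hjb : j ≤ b := Fin.le_iff_val_le_val.mpr (by simp only [b]; omega)
    refine inv_one_sub_cycleMatrix_rescale_apply hc0 hP hcd ?_ ?_ <;>
      simp only [Fin.sub_val_of_le, hja, hji, hjb, a, b] <;> omega
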